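/- Let w : Σ₂ → U(H) satisfy w(c̄) = w(c)* and w(c) = 1 on degenerate 2-simplices. Define λ^w on a loop p = bₙ⋯b₁ over a by λ^w(p) := w(h^a(bₙ))⋯w(h^a(b₁)), where h^a(b) is the unique 2-simplex with vertices (a₀, ∂₁b, ∂₀b). Then λ^w is well defined on the group of loops, i.e. λ^w(p̄) = λ^w(p)*, λ^w is invariant under insertion/deletion of pairs b b̄ and of trivial loops e_x, and λ^w(pq) = λ^w(p)λ^w(q). -/
import Mathlib


variable {A : Type*} {M : Type*} [Monoid M] [StarMul M]

/-- The reversed 1-simplex `b̄` of `b = (∂₁b, ∂₀b)`. -/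
def revP (b : A × A) : A × A := (b.2, b.1)

/-- `λ^w` on a word of 1-simplices over the base point `a`: the product of the
values of `w` on the cone 2-simplices `h^a(b)` with vertices `(a, ∂₁b, ∂₀b)`
(words listed in composition order `bₙ⋯b₁`). -/
def lamW (w : A × A × A → M) (a : A) (l : List (A × A)) : M :=
  (l.map fun b => w (a, b.1, b.2)).prod

omit [StarMul M] in
lemma lamW_append (w : A × A × A → M) (a : A) (u v : List (A × A)) :
    lamW w a (u ++ v) = lamW w a u * lamW w a v := by
  simp [lamW]

/-- Let `w : Σ₂ → U(H)` satisfy `w(c̄) = w(c)*` and `w(c) = 1` on degenerate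
2-simplices (2-simplices encoded by ordered vertex triples, unitarity encoded by
membership in the unitary elements). Then `λ^w` is well defined on the group of
loops: it sends reversed words to adjoints, is invariant under deletion of
adjacent pairs `b b̄` and of trivial loops `e_x = (x,x)`, and is multiplicative
on composition of words. -/
theorem lamW_well_defined (w : A × A × A → M)
    (hu : ∀ c, w c ∈ unitary M)
    (hstar : ∀ c : A × A × A, w (c.1, c.2.2, c.2.1) = star (w c))
    (hdeg : ∀ c : A × A × A,
      (c.1 = c.2.1 ∨ c.1 = c.2.2 ∨ c.2.1 = c.2.2) → w c = 1) :
    (∀ (a : A) (l : List (A × A)),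
      lamW w a ((l.map revP).reverse) = star (lamW w a l)) ∧
    (∀ (a : A) (u v : List (A × A)) (b : A × A),
      lamW w a (u ++ b :: revP b :: v) = lamW w a (u ++ v)) ∧
    (∀ (a : A) (u v : List (A × A)) (x : A),
      lamW w a (u ++ (x, x) :: v) = lamW w a (u ++ v)) ∧
    (∀ (a : A) (u v : List (A × A)),
      lamW w a (u ++ v) = lamW w a u * lamW w a v) := by
  refine ⟨?_, ?_, ?_, fun a u v => lamW_append w a u v⟩
  · intro a l
    induction l with
    | nil => simp [lamW]
    | cons b t ih =>
      simp only [List.map_cons, List.reverse_cons, lamW_append, ih]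
      simp [lamW, revP, hstar (a, b.1, b.2), star_mul]
  · intro a u v b
    simp only [lamW, List.map_append, List.map_cons, List.prod_append,
      List.prod_cons, revP]
    rw [show w (a, b.2, b.1) = star (w (a, b.1, b.2)) from hstar (a, b.1, b.2),
      ← mul_assoc (w (a, b.1, b.2)), (hu (a, b.1, b.2)).2, one_mul]
  · intro a u v x
    simp only [lamW, List.map_append, List.map_cons, List.prod_append,
      List.prod_cons]
    rw [hdeg (a, x, x) (Or.inr (Or.inr rfl)), one_mul]
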